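/- Let (V,Q) be a metric vector space such that the polar form B of Q is non-degenerate, let Q^↑(a₀,a*) := Q(D⁻¹(a*)), and let c ∈ F^×. Then AO(V,Q)^β = O'((F×V)*, c·Q^↑), i.e., the β-image of the motion group of (V,Q) equals the weak orthogonal group of the metric vector space ((F×V)*, c·Q^↑). -/

import Mathlib

/-! Setting: a field `F` and a finite-dimensional `F`-vector space `V`. The dual of
`F × V` is identified with `F × V*` via the pairing `⟨(a₀,a*),(x₀,x)⟩ = a₀x₀ + ⟨a*,x⟩`.
For a quadratic form `Q`, its polar form is `QuadraticMap.polar Q` (the bilinear map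
`Q.polarBilin`) and its radical is `LinearMap.ker Q.polarBilin`. -/

variable {F V : Type*} [Field F] [AddCommGroup V] [Module F V] [FiniteDimensional F V]

/-- The dual linear representation `β` of `AGL(V)` on `(F×V)* = F × V*`: for the affinity
`γ : x ↦ t + g x` (with `g ∈ GL(V)`, `t ∈ V`),
`γ^β (a₀, a*) = (a₀ - ⟨a* ∘ g⁻¹, t⟩, a* ∘ g⁻¹)`. -/
def betaMap (g : V ≃ₗ[F] V) (t : V) :
    (F × Module.Dual F V) →ₗ[F] (F × Module.Dual F V) :=
  LinearMap.prod
    (LinearMap.fst F F (Module.Dual F V) -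
      (Module.Dual.eval F V (g.symm t)).comp (LinearMap.snd F F (Module.Dual F V)))
    ((g.symm.toLinearMap.dualMap).comp (LinearMap.snd F F (Module.Dual F V)))

/-- Given a quadratic form `Q` on `V` whose induced map `D = Q.polarBilin` is bijective
(given here as the linear equivalence `e` with `↑e = Q.polarBilin`), the quadratic form
`Q^↑ : F × V* → F, (a₀, a*) ↦ Q (D⁻¹ a*)`. -/
def qUp (Q : QuadraticForm F V) (e : V ≃ₗ[F] Module.Dual F V) :
    QuadraticForm F (F × Module.Dual F V) :=
  Q.comp (e.symm.toLinearMap ∘ₗ LinearMap.snd F F (Module.Dual F V))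

/-- Given a quadratic form `Q̃` on `F × V*` such that `π ∘ D̃ ∘ π^T : V* → V` is invertible
(given here as the linear equivalence `T`, characterised by
`∀ a b, b (T a) = polar Q̃ (0,a) (0,b)`), the quadratic form
`Q̃^↓ : V → F, x ↦ Q̃ (0, T⁻¹ x)`. -/
def qDown (Qt : QuadraticForm F (F × Module.Dual F V)) (T : Module.Dual F V ≃ₗ[F] V) :
    QuadraticForm F V :=
  Qt.comp ((LinearMap.inr F F (Module.Dual F V)) ∘ₗ T.symm.toLinearMap)

/-- The weak orthogonal group `O'(W,Q)` of a metric vector space, as a set of linear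
endomorphisms: bijective isometries fixing the radical elementwise. -/
def wOrth {W : Type*} [AddCommGroup W] [Module F W] (Qt : QuadraticForm F W) :
    Set (W →ₗ[F] W) :=
  {φ | Function.Bijective φ ∧ (∀ w, Qt (φ w) = Qt w) ∧
    ∀ w ∈ LinearMap.ker Qt.polarBilin, φ w = w}

/-- The `β`-image `AO(V,Q)^β` of the motion group of `(V,Q)`. -/
def motionBetaSet (Q : QuadraticForm F V) :
    Set ((F × Module.Dual F V) →ₗ[F] (F × Module.Dual F V)) :=
  {φ | ∃ (g : V ≃ₗ[F] V) (t : V), (∀ x, Q (g x) = Q x) ∧ φ = betaMap g t}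

/-- The `β`-image `AO'(V,Q)^β` of the weak motion group of `(V,Q)`. -/
def wMotionBetaSet (Q : QuadraticForm F V) :
    Set ((F × Module.Dual F V) →ₗ[F] (F × Module.Dual F V)) :=
  {φ | ∃ (g : V ≃ₗ[F] V) (t : V), (∀ x, Q (g x) = Q x) ∧
    (∀ x ∈ LinearMap.ker Q.polarBilin, g x = x) ∧ φ = betaMap g t}


/-! The radical of `c • Q^↑` is `F × 0`, since `Q^↑` only sees the `V*` coordinate. Every `β(γ)`
fixes it pointwise, and on `V*` it acts by `(g⁻¹)ᵀ = D g D⁻¹` (non-degeneracy), an isometry of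
`Q ∘ D⁻¹` when `g` is one of `Q`. Conversely, an element of the weak orthogonal group fixes `F × 0`,
so it has the form `(a₀, a*) ↦ (a₀ + ℓ a*, h a*)` with `h` an isometry of `Q ∘ D⁻¹`; then
`g := D⁻¹ h D` is an isometry of `Q` with `(g⁻¹)ᵀ = h`, and the linear form `ℓ` on `V*` is evaluation
at a vector of `V`, which gives the translation. -/

section Affine

omit [FiniteDimensional F V]

@[simp]
lemma betaMap_apply (g : V ≃ₗ[F] V) (t : V) (z : F × Module.Dual F V) :
    betaMap g t z = (z.1 - z.2 (g.symm t), g.symm.toLinearMap.dualMap z.2) :=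
  rfl

lemma betaMap_injective (g : V ≃ₗ[F] V) (t : V) : Function.Injective (betaMap g t) := by
  rw [← LinearMap.ker_eq_bot, LinearMap.ker_eq_bot']
  rintro ⟨a₀, a⟩ hz
  simp only [betaMap_apply, Prod.mk_eq_zero] at hz
  obtain rfl : a = 0 :=
    LinearMap.dualMap_injective_of_surjective g.symm.surjective (by simpa using hz.2)
  simpa using hz.1

lemma betaMap_bijective [FiniteDimensional F V] (g : V ≃ₗ[F] V) (t : V) : Function.Bijective (betaMap g t) :=
  ⟨betaMap_injective g t, LinearMap.injective_iff_surjective.mp (betaMap_injective g t)⟩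

lemma betaMap_inl (g : V ≃ₗ[F] V) (t : V) (a₀ : F) : betaMap g t (a₀, 0) = (a₀, 0) := by
  simp

lemma apply_eq_of_fixes_inl {φ : (F × Module.Dual F V) →ₗ[F] (F × Module.Dual F V)}
    (hfix : ∀ a₀ : F, φ (a₀, 0) = (a₀, 0)) (z : F × Module.Dual F V) :
    φ z = (z.1 + (φ (0, z.2)).1, (φ (0, z.2)).2) := by
  conv_lhs => rw [← Prod.fst_add_snd z, map_add]
  rw [hfix]
  ext <;> simp

lemma injective_snd_of_fixes_inl {φ : (F × Module.Dual F V) →ₗ[F] (F × Module.Dual F V)}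
    (hφ : Function.Injective φ) (hfix : ∀ a₀ : F, φ (a₀, 0) = (a₀, 0)) :
    Function.Injective (LinearMap.snd F F (Module.Dual F V) ∘ₗ φ ∘ₗ LinearMap.inr F F _) := by
  rw [← LinearMap.ker_eq_bot, LinearMap.ker_eq_bot']
  intro a ha
  have : φ (0, a) = φ ((φ (0, a)).1, 0) := by
    rw [hfix]; exact Prod.ext rfl ha
  simpa using congrArg Prod.snd (hφ this)

lemma exists_eq_betaMap [FiniteDimensional F V] {φ : (F × Module.Dual F V) →ₗ[F] (F × Module.Dual F V)}
    (hfix : ∀ a₀ : F, φ (a₀, 0) = (a₀, 0)) (g : V ≃ₗ[F] V)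
    (hsnd : ∀ a, (φ (0, a)).2 = g.symm.toLinearMap.dualMap a) :
    ∃ t, φ = betaMap g t := by
  set ℓ := LinearMap.fst F F (Module.Dual F V) ∘ₗ φ ∘ₗ LinearMap.inr F F (Module.Dual F V)
  obtain ⟨s, hs⟩ := (Module.evalEquiv F V).surjective (-ℓ)
  refine ⟨g s, LinearMap.ext fun z => ?_⟩
  have hℓ : z.2 s = -(φ (0, z.2)).1 := LinearMap.congr_fun hs z.2
  rw [apply_eq_of_fixes_inl hfix, betaMap_apply, hsnd, g.symm_apply_apply, hℓ, sub_neg_eq_add]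

end Affine

section Metric

variable (Q : QuadraticForm F V) {e : V ≃ₗ[F] Module.Dual F V}
  (he : (e : V →ₗ[F] Module.Dual F V) = Q.polarBilin)
include he

omit [FiniteDimensional F V]

lemma polar_eq_of_polarBilin (x y : V) : QuadraticMap.polar Q x y = e x y := by
  rw [← QuadraticMap.polarBilin_apply_apply, ← he, LinearEquiv.coe_coe]

lemma polar_qUp (z w : F × Module.Dual F V) :
    QuadraticMap.polar (qUp Q e) z w = z.2 (e.symm w.2) := by
  rw [← QuadraticMap.polarBilin_apply_apply, qUp, QuadraticMap.polarBilin_comp]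
  simp [polar_eq_of_polarBilin Q he]

lemma mem_ker_polarBilin_smul_qUp {c : F} (hc : c ≠ 0) (z : F × Module.Dual F V) :
    z ∈ LinearMap.ker (c • qUp Q e).polarBilin ↔ z.2 = 0 := by
  have hpolar (w : F × Module.Dual F V) :
      (c • qUp Q e).polarBilin z w = c * z.2 (e.symm w.2) := by
    rw [QuadraticMap.polarBilin_apply_apply, FunLike.coe_smul, QuadraticMap.polar_smul,
      polar_qUp Q he, smul_eq_mul]
  rw [LinearMap.mem_ker]
  constructor
  · intro h
    ext v
    simpa [hpolar, hc] using LinearMap.congr_fun h (0, e v)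
  · intro h
    ext w <;> simp [hpolar, h]

lemma dualMap_symm_apply_of_isometry {g : V ≃ₗ[F] V} (hg : ∀ x, Q (g x) = Q x) (x : V) :
    g.symm.toLinearMap.dualMap (e x) = e (g x) := by
  ext y
  have hpolar : QuadraticMap.polar Q (g x) (g (g.symm y)) = QuadraticMap.polar Q x (g.symm y) := by
    simp only [QuadraticMap.polar, ← map_add, hg]
  rw [g.apply_symm_apply, polar_eq_of_polarBilin Q he, polar_eq_of_polarBilin Q he] at hpolar
  exact hpolar.symm

lemma qUp_betaMap {g : V ≃ₗ[F] V} (hg : ∀ x, Q (g x) = Q x) (t : V)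
    (w : F × Module.Dual F V) : qUp Q e (betaMap g t w) = qUp Q e w := by
  obtain ⟨x, hx⟩ := e.surjective w.2
  simp [qUp, ← hx, dualMap_symm_apply_of_isometry Q he hg, hg]

lemma betaMap_mem_wOrth [FiniteDimensional F V] {c : F} (hc : c ≠ 0) {g : V ≃ₗ[F] V} (hg : ∀ x, Q (g x) = Q x) (t : V) :
    betaMap g t ∈ wOrth (c • qUp Q e) := by
  refine ⟨betaMap_bijective g t, fun w => ?_, fun w hw => ?_⟩
  · rw [smul_apply, smul_apply, qUp_betaMap Q he hg]
  · obtain ⟨a₀, a⟩ := w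
    obtain rfl : a = 0 := (mem_ker_polarBilin_smul_qUp Q he hc _).mp hw
    exact betaMap_inl g t a₀

lemma mem_motionBetaSet_of_mem_wOrth [FiniteDimensional F V] {c : F} (hc : c ≠ 0)
    {φ : (F × Module.Dual F V) →ₗ[F] (F × Module.Dual F V)} (hφ : φ ∈ wOrth (c • qUp Q e)) :
    φ ∈ motionBetaSet Q := by
  obtain ⟨hbij, hiso, hrad⟩ := hφ
  have hfix (a₀ : F) : φ (a₀, 0) = (a₀, 0) :=
    hrad _ ((mem_ker_polarBilin_smul_qUp Q he hc _).mpr rfl)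
  set H := LinearEquiv.ofInjectiveEndo _ (injective_snd_of_fixes_inl hbij.1 hfix)
  have hH (a : Module.Dual F V) : H a = (φ (0, a)).2 := rfl
  have hHQ (a : Module.Dual F V) : Q (e.symm (H a)) = Q (e.symm a) :=
    mul_left_cancel₀ hc (by simpa [qUp, hH] using hiso (0, a))
  let g : V ≃ₗ[F] V := e.trans (H.trans e.symm)
  have hg (x : V) : Q (g x) = Q x := (hHQ (e x)).trans (by rw [e.symm_apply_apply])
  obtain ⟨t, ht⟩ : ∃ t, φ = betaMap g t := by
    refine exists_eq_betaMap hfix g fun a => ?_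
    obtain ⟨x, rfl⟩ := e.surjective a
    rw [dualMap_symm_apply_of_isometry Q he hg]
    simp [g, hH]
  exact ⟨g, t, hg, ht⟩

end Metric

/-- Proposition 5.2: if the polar form of `Q` is non-degenerate (its induced map being the
linear equivalence `e`) and `c ∈ F^×`, then `AO(V,Q)^β = O'((F×V)*, c • Q^↑)`. -/
theorem stmt14 (Q : QuadraticForm F V) (e : V ≃ₗ[F] Module.Dual F V)
    (he : (e : V →ₗ[F] Module.Dual F V) = Q.polarBilin)
    (c : F) (hc : c ≠ 0) :
    motionBetaSet Q = wOrth (c • qUp Q e) := by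
  ext φ
  constructor
  · rintro ⟨g, t, hg, rfl⟩
    exact betaMap_mem_wOrth Q he hc hg t
  · exact mem_motionBetaSet_of_mem_wOrth Q he hc
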